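/- The generalized Helberg code C_n(q,d,m,r) is a d-deletion correcting code: for any two distinct codewords x, y ∈ C_n(q,d,m,r) and any subsets D, E ⊆ {1,…,n} with |D| = |E| ≤ d, the deleted words x^{(D)} and y^{(E)} are distinct. -/

import Mathlib

/-- Weight sequence: `W p d i` = w_i(q,d) where p = q-1; w_i = 0 for i ≤ 0 (encoded by
ℕ truncated subtraction together with `W p d 0 = 0`), and w_i = 1 + p·∑_{j=1}^d w_{i-j}
for i ≥ 1. -/
def W (p d : ℕ) : ℕ → ℕ
  | 0 => 0
  | (i+1) => 1 + p * ∑ j ∈ Finset.range d, W p d (i - j)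
decreasing_by exact Nat.lt_succ_of_le (Nat.sub_le i j)

/-- Moment of a word (1-indexed): M(x) = ∑_{i=1}^{n} w_i x_i. -/
def moment (w : ℕ → ℕ) (x : List ℕ) : ℕ :=
  ∑ i ∈ Finset.range x.length, w (i + 1) * x.getD i 0

/-- Deleted word x^{(D)}: delete the symbols at the (1-indexed) positions in D,
keeping the remaining symbols in order. -/
def deleteD (x : List ℕ) (D : Finset ℕ) : List ℕ :=
  ((List.range x.length).filter (fun i => (i + 1) ∉ D)).map (fun i => x.getD i 0)


/-!
If `z` is a subword of `x` (letters at most `p`), every surviving letter only moves to a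
position of smaller weight, so `M(z) ≤ M(x)` for increasing weights. Applied to the
complemented words `a ↦ p - a`, the same monotonicity gives
`M(x) ≤ M(z) + p (w_{|z|+1} + ⋯ + w_{|x|})`, and when at most `d` letters were deleted the
defining recurrence bounds the error term by `w_{|x|+1} - 1`. Hence two words of length `n`
with a common subword of length `≥ n - d` have moments differing by less than
`w_{n+1} ≤ m`, so equal moments modulo `m` are equal. Equal moments force equal words:
the last letters carry the weight `w_n`, which exceeds the possible discrepancy of the
prefixes (again words with a common subword), so they agree, and we induct.
-/

open Finset
open scoped List

lemma W_succ (p d i : ℕ) : W p d (i + 1) = 1 + p * ∑ j ∈ range d, W p d (i - j) := by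
  rw [W]

lemma W_monotone (p d : ℕ) : Monotone (W p d) := by
  refine monotone_nat_of_le_succ fun i => ?_
  induction i using Nat.strong_induction_on with
  | _ i ih =>
    rcases i with _ | i
    · simp [W]
    · rw [W_succ, W_succ]
      gcongr with j
      rcases le_or_gt j i with hj | hj
      · rw [show i + 1 - j = i - j + 1 by omega]
        exact ih _ (by omega)
      · simp [Nat.sub_eq_zero_of_le hj.le, W]

lemma mul_sum_Ico_W_lt (p d k n : ℕ) (h : n ≤ k + d) :
    p * ∑ i ∈ Ico k n, W p d (i + 1) < W p d (n + 1) := by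
  have hreflect : ∑ i ∈ Ico k n, W p d (i + 1) = ∑ j ∈ range (n - k), W p d (n - j) := by
    rw [sum_Ico_eq_sum_range, ← sum_range_reflect]
    refine sum_congr rfl fun j hj => ?_
    rw [mem_range] at hj
    congr 1
    omega
  have hsub : ∑ j ∈ range (n - k), W p d (n - j) ≤ ∑ j ∈ range d, W p d (n - j) :=
    sum_le_sum_of_subset (range_subset_range.mpr (by omega))
  rw [W_succ, hreflect]
  have := Nat.mul_le_mul_left p hsub
  omega

lemma moment_cons (w : ℕ → ℕ) (a : ℕ) (x : List ℕ) :
    moment w (a :: x) = w 1 * a + moment (fun i => w (i + 1)) x := by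
  simp only [moment, List.length_cons, sum_range_succ', List.getD_cons_succ, List.getD_cons_zero]
  ring

lemma moment_append_singleton (w : ℕ → ℕ) (x : List ℕ) (a : ℕ) :
    moment w (x ++ [a]) = moment w x + w (x.length + 1) * a := by
  simp only [moment, List.length_append, List.length_singleton, sum_range_succ,
    List.getD_append_right _ _ _ _ le_rfl, Nat.sub_self, List.getD_cons_zero]
  congr 1
  refine sum_congr rfl fun i hi => ?_
  rw [List.getD_append _ _ _ _ (mem_range.mp hi)]

section moment

variable {w : ℕ → ℕ} {x z : List ℕ} {p : ℕ}

lemma moment_le_moment_of_le {w' : ℕ → ℕ} (h : w ≤ w') (x : List ℕ) :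
    moment w x ≤ moment w' x := by
  unfold moment
  gcongr with i
  exact h _

lemma moment_le_of_sublist (hw : Monotone w) (h : z <+ x) : moment w z ≤ moment w x := by
  induction h generalizing w with
  | slnil => rfl
  | cons a _ ih =>
    rw [moment_cons]
    calc _ ≤ moment (fun i => w (i + 1)) _ := moment_le_moment_of_le (fun i => hw i.le_succ) _
      _ ≤ moment (fun i => w (i + 1)) _ := ih (hw.comp fun _ _ => Nat.succ_le_succ)
      _ ≤ _ := Nat.le_add_left _ _
  | cons_cons a _ ih =>
    rw [moment_cons, moment_cons]
    exact Nat.add_le_add_left (ih (hw.comp fun _ _ => Nat.succ_le_succ)) _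

lemma moment_add_moment_map_tsub (w : ℕ → ℕ) (hx : ∀ a ∈ x, a ≤ p) :
    moment w x + moment w (x.map (p - ·)) = p * ∑ i ∈ range x.length, w (i + 1) := by
  simp only [moment, List.length_map, ← sum_add_distrib, mul_sum]
  refine sum_congr rfl fun i hi => ?_
  have hi : i < x.length := mem_range.mp hi
  rw [List.getD_eq_getElem _ _ hi, List.getD_eq_getElem _ _ (by simpa), List.getElem_map,
    ← mul_add, Nat.add_sub_cancel' (hx _ (List.getElem_mem hi)), mul_comm]

lemma moment_le_moment_sublist_add (hw : Monotone w) (h : z <+ x) (hx : ∀ a ∈ x, a ≤ p) :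
    moment w x ≤ moment w z + p * ∑ i ∈ Ico z.length x.length, w (i + 1) := by
  have hcx := moment_add_moment_map_tsub w hx
  have hcz := moment_add_moment_map_tsub w fun a ha => hx a (h.subset ha)
  have hc := moment_le_of_sublist hw (h.map (p - ·))
  rw [← sum_range_add_sum_Ico _ h.length_le, mul_add] at hcx
  omega

end moment

lemma moment_W_lt_moment_sublist_add {p d : ℕ} {x z : List ℕ} (h : z <+ x)
    (hd : x.length ≤ z.length + d) (hx : ∀ a ∈ x, a ≤ p) :
    moment (W p d) x < moment (W p d) z + W p d (x.length + 1) :=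
  (moment_le_moment_sublist_add (W_monotone p d) h hx).trans_lt
    (Nat.add_lt_add_left (mul_sum_Ico_W_lt p d _ _ hd) _)

lemma moment_W_lt_add_of_common_sublist {p d : ℕ} {x y z : List ℕ} (hzx : z <+ x)
    (hzy : z <+ y) (hd : x.length ≤ z.length + d) (hx : ∀ a ∈ x, a ≤ p) :
    moment (W p d) x < moment (W p d) y + W p d (x.length + 1) :=
  (moment_W_lt_moment_sublist_add hzx hd hx).trans_le
    (Nat.add_le_add_right (moment_le_of_sublist (W_monotone p d) hzy) _)

protected theorem List.Sublist.dropLast {α : Type*} {l₁ l₂ : List α} (h : l₁ <+ l₂) :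
    l₁.dropLast <+ l₂.dropLast := by
  simpa using h.reverse.tail

theorem eq_of_moment_W_eq {p d : ℕ} {x y z : List ℕ} (hzx : z <+ x) (hzy : z <+ y)
    (hlen : y.length = x.length) (hd : x.length ≤ z.length + d)
    (hx : ∀ a ∈ x, a ≤ p) (hy : ∀ a ∈ y, a ≤ p) (h : moment (W p d) x = moment (W p d) y) :
    x = y := by
  induction x using List.reverseRecOn generalizing y z with
  | nil => exact (List.length_eq_zero_iff.mp hlen).symm
  | append_singleton x a ih =>
    obtain ⟨y, b, rfl⟩ : ∃ y' b, y = y' ++ [b] := by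
      rcases List.eq_nil_or_concat y with rfl | ⟨y', b, rfl⟩
      · simp at hlen
      · exact ⟨y', b, by simp⟩
    simp only [List.length_append, List.length_singleton, Nat.add_right_cancel_iff] at hlen
    simp only [List.mem_append, List.mem_singleton] at hx hy
    have hzx' : z.dropLast <+ x := by simpa using hzx.dropLast
    have hzy' : z.dropLast <+ y := by simpa using hzy.dropLast
    have hd' : x.length ≤ z.dropLast.length + d := by simp at hd ⊢; omega
    have hx' : ∀ c ∈ x, c ≤ p := fun c hc => hx c (.inl hc)
    have hy' : ∀ c ∈ y, c ≤ p := fun c hc => hy c (.inl hc)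
    have hxy := moment_W_lt_add_of_common_sublist hzx' hzy' hd' hx'
    have hyx := moment_W_lt_add_of_common_sublist hzy' hzx' (hlen ▸ hd') hy'
    rw [moment_append_singleton, moment_append_singleton, hlen] at h
    rw [hlen] at hyx
    set c := W p d (x.length + 1)
    have hab : a = b := by
      have hlt : c * a < c * (b + 1) := by rw [mul_add, mul_one]; omega
      have hgt : c * b < c * (a + 1) := by rw [mul_add, mul_one]; omega
      have := Nat.lt_of_mul_lt_mul_left hlt
      have := Nat.lt_of_mul_lt_mul_left hgt
      omega
    subst hab
    rw [ih hzx' hzy' hlen hd' hx' hy' (by omega)]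

lemma deleteD_sublist (x : List ℕ) (D : Finset ℕ) : deleteD x D <+ x := by
  have hrange : (List.range x.length).map (x.getD · 0) = x :=
    List.ext_getElem (by simp) fun i _ hi => by simp [List.getElem?_eq_getElem hi]
  conv_rhs => rw [← hrange]
  exact List.filter_sublist.map _

lemma length_le_length_deleteD_add_card (x : List ℕ) (D : Finset ℕ) :
    x.length ≤ (deleteD x D).length + D.card := by
  have hsplit := List.length_eq_length_filter_add (l := List.range x.length)
    (fun i => decide (i + 1 ∉ D))
  set deleted := (List.range x.length).filter (fun i => !decide (i + 1 ∉ D))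
  have hdeleted : deleted.length ≤ D.card := by
    have hnodup : (deleted.map (· + 1)).Nodup :=
      (List.nodup_range.sublist List.filter_sublist).map fun _ _ => Nat.add_right_cancel
    rw [← List.length_map (· + 1), ← List.toFinset_card_of_nodup hnodup]
    refine card_le_card fun i hi => ?_
    simp only [List.mem_toFinset, List.mem_map, List.mem_filter, deleted] at hi
    obtain ⟨j, ⟨-, hj⟩, rfl⟩ := hi
    simpa using hj
  rw [List.length_range] at hsplit
  simp only [deleteD, List.length_map]
  omega

theorem helberg_d_deletion_correcting_general (q d n m r : ℕ) (hm : W (q - 1) d (n + 1) ≤ m)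
    (x y : List ℕ) (hxlen : x.length = n) (hylen : y.length = n)
    (hx : ∀ a ∈ x, a < q) (hy : ∀ a ∈ y, a < q) (hne : x ≠ y)
    (hxcode : moment (W (q - 1) d) x % m = r) (hycode : moment (W (q - 1) d) y % m = r)
    (D E : Finset ℕ) (hd' : D.card ≤ d) :
    deleteD x D ≠ deleteD y E := by
  intro hxy
  have hzx := deleteD_sublist x D
  have hzy : deleteD x D <+ y := hxy ▸ deleteD_sublist y E
  have hd : x.length ≤ (deleteD x D).length + d :=
    (length_le_length_deleteD_add_card x D).trans (by omega)
  have hx' : ∀ a ∈ x, a ≤ q - 1 := fun a ha => Nat.le_sub_one_of_lt (hx a ha)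
  have hy' : ∀ a ∈ y, a ≤ q - 1 := fun a ha => Nat.le_sub_one_of_lt (hy a ha)
  have hlt_xy := moment_W_lt_add_of_common_sublist hzx hzy hd hx'
  have hlt_yx := moment_W_lt_add_of_common_sublist (d := d) hzy hzx (by omega) hy'
  rw [hxlen] at hlt_xy
  rw [hylen] at hlt_yx
  have hmoment : moment (W (q - 1) d) x = moment (W (q - 1) d) y := by
    refine Nat.ModEq.eq_of_abs_lt (hxcode.trans hycode.symm) (abs_sub_lt_iff.mpr ⟨?_, ?_⟩) <;>
      omega
  exact hne (eq_of_moment_W_eq hzx hzy (by omega) hd hx' hy' hmoment)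

theorem helberg_d_deletion_correcting (q d n m r : ℕ) (hq : 2 ≤ q) (hd : 1 ≤ d)
    (hm : W (q - 1) d (n + 1) ≤ m) (hr : r < m)
    (x y : List ℕ) (hxlen : x.length = n) (hylen : y.length = n)
    (hx : ∀ a ∈ x, a < q) (hy : ∀ a ∈ y, a < q) (hne : x ≠ y)
    (hxcode : moment (W (q - 1) d) x % m = r) (hycode : moment (W (q - 1) d) y % m = r)
    (D E : Finset ℕ) (hD : D ⊆ Finset.Icc 1 n) (hE : E ⊆ Finset.Icc 1 n)
    (hcard : D.card = E.card) (hd' : D.card ≤ d) :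
    deleteD x D ≠ deleteD y E :=
  helberg_d_deletion_correcting_general q d n m r hm x y hxlen hylen hx hy hne hxcode hycode D E hd'
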